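/- Let $\Gamma$ be a finitely generated residually finite group with generating set $X$, and let $\sub_\Gamma(k)$ denote the number of normal subgroups of $\Gamma$ of index at most $k$. Then $\log(\word_{\Gamma,X}(n)) \leq \sub_\Gamma(\mathrm{D}^{\lhd}_{\Gamma,X}(2n)) \cdot \log(\mathrm{D}^{\lhd}_{\Gamma,X}(2n))$, where $\word_{\Gamma,X}(n) = |B_{\Gamma,X}(n)|$ is the word growth function. -/

import Mathlib

/-- Word length with respect to a (symmetrized) generating set `X`. -/
noncomputable def wordLength {G : Type*} [Group G] (X : Set G) (g : G) : ℕ :=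
  sInf {n | ∃ w : List G, (∀ x ∈ w, x ∈ X ∨ x⁻¹ ∈ X) ∧ w.prod = g ∧ w.length = n}

/-- The word growth function: the cardinality of the ball of radius `n`. -/
noncomputable def wordGrowth {G : Type*} [Group G] (X : Set G) (n : ℕ) : ℕ :=
  Nat.card {g : G // wordLength X g ≤ n}

/-- The number of normal subgroups of index at most `k`. -/
noncomputable def normalSubgroupGrowth (G : Type*) [Group G] (k : ℕ) : ℕ :=
  Nat.card {H : Subgroup G // H.Normal ∧ H.FiniteIndex ∧ H.index ≤ k}

/-- The normal divisibility function: the least `k` such that every nontrivial element of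
word length at most `m` lies outside some normal subgroup of index at most `k`. -/
noncomputable def normalDivMax {G : Type*} [Group G] (X : Set G) (m : ℕ) : ℕ :=
  sInf {k | ∀ g : G, g ≠ 1 → wordLength X g ≤ m →
    ∃ H : Subgroup G, H.Normal ∧ H.FiniteIndex ∧ H.index ≤ k ∧ g ∉ H}

/-!
If `a ≠ b` lie in the ball of radius `n`, then `a⁻¹ * b` is a nontrivial element of length
at most `2 n`, so it lies outside some normal subgroup of index at most `D = D^◁(2n)`. Hence
the ball injects into `Γ ⧸ Ω`, where `Ω` is the intersection of the finitely many (`Γ` being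
finitely generated) normal subgroups of index at most `D`, and `|Γ ⧸ Ω| ≤ D ^ s` with `s`
their number.
-/

section WordLength

variable {G : Type*} [Group G] {X : Set G}

lemma wordLength_prod_le_length {w : List G} (hw : ∀ x ∈ w, x ∈ X ∨ x⁻¹ ∈ X) :
    wordLength X w.prod ≤ w.length :=
  Nat.sInf_le ⟨w, hw, rfl, rfl⟩

lemma exists_prod_eq_length_eq_wordLength (hX : Subgroup.closure X = ⊤) (g : G) :
    ∃ w : List G, (∀ x ∈ w, x ∈ X ∨ x⁻¹ ∈ X) ∧ w.prod = g ∧ w.length = wordLength X g := by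
  have hg : g ∈ Submonoid.closure (X ∪ X⁻¹) := by
    rw [← Subgroup.closure_toSubmonoid, hX]
    trivial
  obtain ⟨w, hw, rfl⟩ := Submonoid.exists_list_of_mem_closure hg
  exact Nat.sInf_mem (s := {n | ∃ v : List G, (∀ x ∈ v, x ∈ X ∨ x⁻¹ ∈ X) ∧ v.prod = w.prod ∧
    v.length = n}) ⟨w.length, w, hw, rfl, rfl⟩

lemma wordLength_mul_le (hX : Subgroup.closure X = ⊤) (a b : G) :
    wordLength X (a * b) ≤ wordLength X a + wordLength X b := by
  obtain ⟨u, hu, rfl, hul⟩ := exists_prod_eq_length_eq_wordLength hX a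
  obtain ⟨v, hv, rfl, hvl⟩ := exists_prod_eq_length_eq_wordLength hX b
  have huv : ∀ x ∈ u ++ v, x ∈ X ∨ x⁻¹ ∈ X := by
    simpa only [List.mem_append, or_imp, forall_and] using And.intro hu hv
  simpa only [List.prod_append, List.length_append, hul, hvl] using
    wordLength_prod_le_length huv

lemma wordLength_inv_le (hX : Subgroup.closure X = ⊤) (g : G) :
    wordLength X g⁻¹ ≤ wordLength X g := by
  obtain ⟨w, hw, rfl, hwl⟩ := exists_prod_eq_length_eq_wordLength hX g
  have hw' : ∀ x ∈ (w.map (·⁻¹)).reverse, x ∈ X ∨ x⁻¹ ∈ X := by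
    intro x hx
    rw [List.mem_reverse, List.mem_map] at hx
    obtain ⟨y, hy, rfl⟩ := hx
    simpa only [inv_inv, or_comm] using hw y hy
  simpa only [List.prod_inv_reverse, List.length_reverse, List.length_map, hwl] using
    wordLength_prod_le_length hw'

lemma wordLength_inv_mul_le (hX : Subgroup.closure X = ⊤) (a b : G) :
    wordLength X (a⁻¹ * b) ≤ wordLength X a + wordLength X b :=
  (wordLength_mul_le hX _ _).trans (Nat.add_le_add_right (wordLength_inv_le hX a) _)

lemma finite_setOf_wordLength_le (hXfin : X.Finite) (hX : Subgroup.closure X = ⊤) (m : ℕ) :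
    {g : G | wordLength X g ≤ m}.Finite := by
  have : Finite ↥(X ∪ X⁻¹) := (hXfin.union hXfin.inv).to_subtype
  refine ((List.finite_length_le ↥(X ∪ X⁻¹) m).image fun w => (w.map Subtype.val).prod).subset ?_
  intro g hg
  obtain ⟨w, hw, rfl, hwl⟩ := exists_prod_eq_length_eq_wordLength hX g
  lift w to List ↥(X ∪ X⁻¹) using hw
  rw [Set.mem_ofPred_eq, ← hwl, List.length_map] at hg
  exact ⟨w, hg, rfl⟩

end WordLength

section NormalSubgroups

variable {G : Type*} [Group G]

lemma exists_monoidHom_perm_ker_eq (H : Subgroup G) [H.Normal] [H.FiniteIndex] {k : ℕ}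
    (hk : H.index ≤ k) : ∃ f : G →* Equiv.Perm (Fin k), f.ker = H := by
  have : Fintype (G ⧸ H) := Fintype.ofFinite _
  obtain ⟨e⟩ : Nonempty (G ⧸ H ↪ Fin k) := Function.Embedding.nonempty_of_card_le <| by
    rwa [Fintype.card_fin, ← Nat.card_eq_fintype_card, ← Subgroup.index_eq_card]
  refine ⟨(Equiv.Perm.viaEmbeddingHom e).comp (MulAction.toPermHom G (G ⧸ H)), ?_⟩
  rw [MonoidHom.ker_comp_of_injective _ _ (Equiv.Perm.viaEmbeddingHom_injective e),
    ← Subgroup.normalCore_eq_ker, H.normalCore_eq_self]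

lemma finite_monoidHom [Group.FG G] (T : Type*) [Group T] [Finite T] : Finite (G →* T) := by
  obtain ⟨S, hS, hSfin⟩ := Group.fg_iff.1 ‹Group.FG G›
  have : Finite S := hSfin.to_subtype
  exact Finite.of_injective (fun f : G →* T => fun x : S => f x)
    fun f g h => MonoidHom.eq_of_eqOn_dense hS fun x hx => congrFun h ⟨x, hx⟩

lemma finite_normal_index_le [Group.FG G] (k : ℕ) :
    Finite {H : Subgroup G // H.Normal ∧ H.FiniteIndex ∧ H.index ≤ k} := by
  have := finite_monoidHom (G := G) (Equiv.Perm (Fin k))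
  refine ((Set.finite_range fun f : G →* Equiv.Perm (Fin k) => f.ker).subset ?_).to_subtype
  rintro H ⟨hN, hF, hk⟩
  exact exists_monoidHom_perm_ker_eq H hk

lemma card_le_pow_of_forall_inv_mul_notMem {ι : Type*} [Finite ι] (H : ι → Subgroup G)
    (hH : ∀ i, (H i).FiniteIndex) {D : ℕ} (hD : ∀ i, (H i).index ≤ D) {p : G → Prop}
    (hp : ∀ a b, p a → p b → a ≠ b → ∃ i, a⁻¹ * b ∉ H i) :
    Nat.card {g // p g} ≤ D ^ Nat.card ι := by
  have : Fintype ι := Fintype.ofFinite ι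
  have hinj : Function.Injective fun g : {g // p g} => (g.1 : G ⧸ ⨅ i, H i) := by
    rintro ⟨a, ha⟩ ⟨b, hb⟩ hab
    by_contra hne
    obtain ⟨i, hi⟩ := hp a b ha hb fun h => hne (Subtype.ext h)
    exact hi (iInf_le H i (QuotientGroup.eq.1 hab))
  have : (⨅ i, H i).FiniteIndex := Subgroup.finiteIndex_iInf hH
  calc Nat.card {g // p g} ≤ Nat.card (G ⧸ ⨅ i, H i) := Nat.card_le_card_of_injective _ hinj
    _ = (⨅ i, H i).index := (Subgroup.index_eq_card _).symm
    _ ≤ ∏ i, (H i).index := Subgroup.index_iInf_le H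
    _ ≤ ∏ _i : ι, D := Finset.prod_le_prod' fun i _ => hD i
    _ = D ^ Nat.card ι := by rw [Finset.prod_const, Finset.card_univ, Nat.card_eq_fintype_card]

lemma exists_normal_index_le_normalDivMax {X : Set G} {m : ℕ}
    (hball : {g : G | wordLength X g ≤ m}.Finite)
    (hrf : ∀ g : G, g ≠ 1 → ∃ H : Subgroup G, H.Normal ∧ H.FiniteIndex ∧ g ∉ H)
    {g : G} (hg : g ≠ 1) (hgm : wordLength X g ≤ m) :
    ∃ H : Subgroup G, H.Normal ∧ H.FiniteIndex ∧ H.index ≤ normalDivMax X m ∧ g ∉ H := by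
  choose! K hK using hrf
  suffices hD : normalDivMax X m ∈ {k | ∀ g : G, g ≠ 1 → wordLength X g ≤ m →
      ∃ H : Subgroup G, H.Normal ∧ H.FiniteIndex ∧ H.index ≤ k ∧ g ∉ H} from hD g hg hgm
  refine Nat.sInf_mem ⟨hball.toFinset.sup fun g => (K g).index, fun g hg hgm => ?_⟩
  obtain ⟨hN, hF, hgK⟩ := hK g hg
  exact ⟨K g, hN, hF, Finset.le_sup (f := fun g => (K g).index) (hball.mem_toFinset.2 hgm), hgK⟩

end NormalSubgroups

lemma log_natCast_le_mul_log_of_le_pow {a D s : ℕ} (h : a ≤ D ^ s) :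
    Real.log a ≤ s * Real.log D := by
  rcases Nat.eq_zero_or_pos a with rfl | ha
  · rw [Nat.cast_zero, Real.log_zero]
    exact mul_nonneg s.cast_nonneg (Real.log_natCast_nonneg D)
  · rw [← Real.log_pow]
    exact Real.log_le_log (by exact_mod_cast ha) (by exact_mod_cast h)

theorem stmt_12 {Γ : Type*} [Group Γ] (X : Set Γ) (hXfin : X.Finite)
    (hXgen : Subgroup.closure X = ⊤)
    (hrf : ∀ g : Γ, g ≠ 1 → ∃ H : Subgroup Γ, H.Normal ∧ H.FiniteIndex ∧ g ∉ H)
    (n : ℕ) :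
    Real.log (wordGrowth X n) ≤
      normalSubgroupGrowth Γ (normalDivMax X (2 * n)) *
        Real.log (normalDivMax X (2 * n)) := by
  have : Group.FG Γ := Group.fg_iff.2 ⟨X, hXgen, hXfin⟩
  set D := normalDivMax X (2 * n)
  have := finite_normal_index_le (G := Γ) D
  have hball := finite_setOf_wordLength_le hXfin hXgen (2 * n)
  have hcard : wordGrowth X n ≤ D ^ normalSubgroupGrowth Γ D := by
    refine card_le_pow_of_forall_inv_mul_notMem
      (fun H : {H : Subgroup Γ // H.Normal ∧ H.FiniteIndex ∧ H.index ≤ D} => H.1)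
      (fun H => H.2.2.1) (fun H => H.2.2.2) fun a b ha hb hab => ?_
    have hab' : a⁻¹ * b ≠ 1 := by rwa [ne_eq, inv_mul_eq_one]
    have hlen : wordLength X (a⁻¹ * b) ≤ 2 * n := by
      have := wordLength_inv_mul_le hXgen a b
      omega
    obtain ⟨H, hN, hF, hHD, hnot⟩ := exists_normal_index_le_normalDivMax hball hrf hab' hlen
    exact ⟨⟨H, hN, hF, hHD⟩, hnot⟩
  exact log_natCast_le_mul_log_of_le_pow hcard
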